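/- Fix dead time τ > 0 and regard μ* as a function of the peak power A > 0. Then: (i) if Λ0 = 0, lim_{A→∞} μ*(A) = 1/2 and lim_{A→0⁺} μ*(A) = 1/e; (ii) if Λ0 > 0, lim_{A→∞} μ*(A) = 1 − 1/[(1 + exp(e^{Λ0·τ}·h_b(p(Λ0))))·(1 − p(Λ0))] and lim_{A→0⁺} μ*(A) = 1/2. -/

import Mathlib

/-- p(x) = 1 − exp(−x·τ), the detection probability over a dead time τ. -/
noncomputable def pdet (τ x : ℝ) : ℝ := 1 - Real.exp (-(x * τ))

/-- Binary entropy h_b(x) = −x·ln x − (1−x)·ln(1−x) (with 0·ln 0 = 0). -/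
noncomputable def hb (x : ℝ) : ℝ := -(x * Real.log x) - (1 - x) * Real.log (1 - x)

/-- F(μ) = h_b((1−μ)·p(Λ0) + μ·p(A+Λ0)) − (1−μ)·h_b(p(Λ0)) − μ·h_b(p(A+Λ0)). -/
noncomputable def Fcap (τ A Λ0 μ : ℝ) : ℝ :=
  hb ((1 - μ) * pdet τ Λ0 + μ * pdet τ (A + Λ0)) -
    (1 - μ) * hb (pdet τ Λ0) - μ * hb (pdet τ (A + Λ0))

/-- a = exp(−(h_b(p(A+Λ0)) − h_b(p(Λ0)))/(p(A+Λ0) − p(Λ0))). -/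
noncomputable def aCoef (τ A Λ0 : ℝ) : ℝ :=
  Real.exp (-((hb (pdet τ (A + Λ0)) - hb (pdet τ Λ0)) /
    (pdet τ (A + Λ0) - pdet τ Λ0)))

/-- μ* = (a/(1+a) − p(Λ0))/(p(A+Λ0) − p(Λ0)), the optimal duty cycle. -/
noncomputable def muStar (τ A Λ0 : ℝ) : ℝ :=
  (aCoef τ A Λ0 / (1 + aCoef τ A Λ0) - pdet τ Λ0) / (pdet τ (A + Λ0) - pdet τ Λ0)

open Real Filter Set

lemma continuous_hb : Continuous hb :=
  (Real.continuous_mul_log.neg).sub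
    (Real.continuous_mul_log.comp (continuous_const.sub continuous_id))

lemma hb_one : hb 1 = 0 := by simp [hb]

lemma hb_zero : hb 0 = 0 := by simp [hb]

lemma hb_deriv {x : ℝ} (hx0 : 0 < x) (hx1 : x < 1) :
    HasDerivAt hb (Real.log (1 - x) - Real.log x) x := by
  have h1 : HasDerivAt (fun t : ℝ => t * Real.log t) (Real.log x + 1) x :=
    Real.hasDerivAt_mul_log hx0.ne'
  have h2 : HasDerivAt (fun t : ℝ => (1 - t) * Real.log (1 - t))
      (-(Real.log (1 - x) + 1)) x := by
    have hs : HasDerivAt (fun t : ℝ => 1 - t) (-1) x := (hasDerivAt_id x).const_sub 1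
    have := (Real.hasDerivAt_mul_log (x := 1 - x) (by linarith)).comp x hs
    simpa [Function.comp_def] using this
  have h3 := (h1.neg).sub h2
  have : HasDerivAt hb (-(Real.log x + 1) - -(Real.log (1 - x) + 1)) x := h3
  convert this using 1
  ring

lemma phi_deriv {x : ℝ} (hx0 : 0 < x) (hx1 : x < 1) :
    HasDerivAt (fun t : ℝ => Real.log (1 - t) - Real.log t)
      (-(1 - x)⁻¹ - x⁻¹) x := by
  have hs : HasDerivAt (fun t : ℝ => 1 - t) (-1) x := (hasDerivAt_id x).const_sub 1
  have h1 := (Real.hasDerivAt_log (x := 1 - x) (by linarith)).comp x hs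
  have h2 := Real.hasDerivAt_log hx0.ne'
  have := h1.sub h2
  refine this.congr_deriv ?_
  ring

lemma tendsto_slope_slope (f φ : ℝ → ℝ) (x c : ℝ)
    (hf : ∀ᶠ t in nhds x, HasDerivAt f (φ t) t)
    (hφ : HasDerivAt φ c x) :
    Filter.Tendsto (fun t => ((f t - f x) / (t - x) - φ x) / (t - x))
      (nhdsWithin x {x}ᶜ) (nhds (c / 2)) := by
  have hne : ∀ᶠ t in nhdsWithin x {x}ᶜ, t ≠ x :=
    eventually_mem_nhdsWithin.mono (fun t ht => ht)
  have hN : ∀ᶠ t in nhdsWithin x {x}ᶜ,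
      HasDerivAt (fun t => f t - f x - φ x * (t - x)) (φ t - φ x) t := by
    refine (eventually_nhdsWithin_of_eventually_nhds (hf.mono ?_))
    intro t ht
    have h2 : HasDerivAt (fun t : ℝ => φ x * (t - x)) (φ x) t := by
      simpa using ((hasDerivAt_id t).sub_const x).const_mul (φ x)
    exact (ht.sub_const (f x)).sub h2
  have hD : ∀ᶠ t in nhdsWithin x {x}ᶜ,
      HasDerivAt (fun t : ℝ => (t - x) ^ 2) (2 * (t - x)) t := by
    filter_upwards with t
    simpa [mul_comm, Pi.pow_def] using ((hasDerivAt_id t).sub_const x).pow 2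
  have hD' : ∀ᶠ t in nhdsWithin x {x}ᶜ, 2 * (t - x) ≠ 0 := by
    filter_upwards [hne] with t ht
    have : t - x ≠ 0 := sub_ne_zero.mpr ht
    positivity
  have hcont : ContinuousAt f x := (hf.self_of_nhds).continuousAt
  have hfa : Tendsto (fun t => f t - f x - φ x * (t - x)) (nhdsWithin x {x}ᶜ) (nhds 0) := by
    have hca : ContinuousAt (fun t => f t - f x - φ x * (t - x)) x :=
      (hcont.sub continuousAt_const).sub
        (continuousAt_const.mul (continuousAt_id.sub continuousAt_const))
    have := hca.tendsto.mono_left (nhdsWithin_le_nhds (s := {x}ᶜ))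
    simpa using this
  have hga : Tendsto (fun t : ℝ => (t - x) ^ 2) (nhdsWithin x {x}ᶜ) (nhds 0) := by
    have hca : ContinuousAt (fun t : ℝ => (t - x) ^ 2) x :=
      (continuousAt_id.sub continuousAt_const).pow 2
    have := hca.tendsto.mono_left (nhdsWithin_le_nhds (s := {x}ᶜ))
    simpa using this
  have hslope : Tendsto (slope φ x) (nhdsWithin x {x}ᶜ) (nhds c) :=
    hasDerivAt_iff_tendsto_slope.mp hφ
  have hdiv : Tendsto (fun t => (φ t - φ x) / (2 * (t - x))) (nhdsWithin x {x}ᶜ)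
      (nhds (c / 2)) := by
    have := hslope.div_const 2
    refine this.congr (fun t => ?_)
    rw [slope_def_field, div_div, mul_comm]
  have hmain := HasDerivAt.lhopital_zero_nhdsNE hN hD hD' hfa hga hdiv
  refine hmain.congr' ?_
  filter_upwards [hne] with t ht
  have h : t - x ≠ 0 := sub_ne_zero.mpr ht
  field_simp

/-- limits of the optimal duty cycle μ*(A) for fixed dead time τ:
(i) if Λ0 = 0 then μ*(A) → 1/2 as A → ∞ and μ*(A) → 1/e as A → 0⁺;
(ii) if Λ0 > 0 then μ*(A) → 1 − 1/[(1 + exp(e^{Λ0·τ}·h_b(p(Λ0))))·(1 − p(Λ0))] as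
A → ∞ and μ*(A) → 1/2 as A → 0⁺. -/
theorem muStar_asymptotics (τ Λ0 : ℝ) (hτ : 0 < τ) (hΛ0 : 0 ≤ Λ0) :
    (Λ0 = 0 →
      Filter.Tendsto (fun A : ℝ => muStar τ A Λ0) Filter.atTop (nhds (1 / 2)) ∧
        Filter.Tendsto (fun A : ℝ => muStar τ A Λ0)
          (nhdsWithin 0 (Set.Ioi 0)) (nhds (1 / Real.exp 1))) ∧
    (0 < Λ0 →
      Filter.Tendsto (fun A : ℝ => muStar τ A Λ0) Filter.atTop
          (nhds (1 - 1 / ((1 + Real.exp (Real.exp (Λ0 * τ) * hb (pdet τ Λ0))) *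
            (1 - pdet τ Λ0)))) ∧
        Filter.Tendsto (fun A : ℝ => muStar τ A Λ0)
          (nhdsWithin 0 (Set.Ioi 0)) (nhds (1 / 2))) := by
  set p0 := pdet τ Λ0 with hp0def
  have hp0lt1 : p0 < 1 := by
    have := Real.exp_pos (-(Λ0 * τ))
    simp only [hp0def, pdet]; linarith
  have hp1ne : (1 : ℝ) - p0 ≠ 0 := by linarith
  have h1mp0 : 1 - p0 = Real.exp (-(Λ0 * τ)) := by simp [hp0def, pdet]
  -- Φ
  set Φ : ℝ → ℝ := fun t =>
    ((1 + Real.exp ((hb t - hb p0) / (t - p0)))⁻¹ - p0) / (t - p0) with hΦdef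
  have muStar_eq : ∀ A : ℝ, muStar τ A Λ0 = Φ (pdet τ (A + Λ0)) := by
    intro A
    simp only [muStar, aCoef, hΦdef, ← hp0def]
    congr 2
    set g := (hb (pdet τ (A + Λ0)) - hb p0) / (pdet τ (A + Λ0) - p0) with hg
    rw [Real.exp_neg]
    have he : Real.exp g ≠ 0 := (Real.exp_pos g).ne'
    field_simp
    ring
  -- q basic facts
  have hqgt : ∀ A : ℝ, 0 < A → p0 < pdet τ (A + Λ0) := by
    intro A hA
    have : Real.exp (-((A + Λ0) * τ)) < Real.exp (-(Λ0 * τ)) := by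
      apply Real.exp_lt_exp.mpr
      nlinarith [mul_pos hA hτ]
    simp only [hp0def, pdet]; linarith
  have hqcont : Continuous (fun A : ℝ => pdet τ (A + Λ0)) := by
    unfold pdet; continuity
  have hq0 : Tendsto (fun A : ℝ => pdet τ (A + Λ0)) (nhdsWithin 0 (Set.Ioi 0))
      (nhdsWithin p0 (Set.Ioi p0)) := by
    rw [tendsto_nhdsWithin_iff]
    constructor
    · have := hqcont.continuousAt (x := 0)
      have h0 : pdet τ (0 + Λ0) = p0 := by rw [zero_add]
      rw [ContinuousAt, h0] at this
      exact this.mono_left nhdsWithin_le_nhds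
    · filter_upwards [self_mem_nhdsWithin] with A hA
      exact hqgt A hA
  have hqne : Tendsto (fun A : ℝ => pdet τ (A + Λ0)) (nhdsWithin 0 (Set.Ioi 0))
      (nhdsWithin p0 {p0}ᶜ) :=
    hq0.mono_right (nhdsWithin_mono _ (fun y hy => ne_of_gt hy))
  -- q → 1 at top
  have hq1 : Tendsto (fun A : ℝ => pdet τ (A + Λ0)) atTop (nhds 1) := by
    have h1 : Tendsto (fun A : ℝ => (A + Λ0) * τ) atTop atTop :=
      (tendsto_atTop_add_const_right atTop Λ0 tendsto_id).atTop_mul_const hτ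
    have h2 : Tendsto (fun A : ℝ => -((A + Λ0) * τ)) atTop atBot :=
      tendsto_neg_atTop_atBot.comp h1
    have h3 := Real.tendsto_exp_atBot.comp h2
    have := tendsto_const_nhds (x := (1 : ℝ)) (f := atTop).sub h3
    simpa [pdet] using this
  -- continuity of Φ at 1
  have hΦc : ContinuousAt Φ 1 := by
    have hsl : ContinuousAt (fun t : ℝ => (hb t - hb p0) / (t - p0)) 1 :=
      (continuous_hb.continuousAt.sub continuousAt_const).div
        (continuousAt_id.sub continuousAt_const) (by simpa using hp1ne)
    have hnum : ContinuousAt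
        (fun t : ℝ => (1 + Real.exp ((hb t - hb p0) / (t - p0)))⁻¹ - p0) 1 := by
      refine ContinuousAt.sub ?_ continuousAt_const
      refine ContinuousAt.inv₀ (continuousAt_const.add
        (Real.continuous_exp.continuousAt.comp hsl)) ?_
      positivity
    exact hnum.div (continuousAt_id.sub continuousAt_const) (by simpa using hp1ne)
  have hΦtop : Tendsto (fun A : ℝ => muStar τ A Λ0) atTop (nhds (Φ 1)) := by
    have := hΦc.tendsto.comp hq1
    exact this.congr (fun A => (muStar_eq A).symm)
  constructor
  · -- Λ0 = 0
    intro h0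
    subst h0
    have hp00 : p0 = 0 := by simp [hp0def, pdet]
    constructor
    · have hΦ1 : Φ 1 = 1 / 2 := by
        simp [hΦdef, hp00, hb_one, hb_zero]
        norm_num
      rwa [hΦ1] at hΦtop
    · -- A → 0+, limit 1/e
      set f : ℝ → ℝ := fun t =>
        (t + Real.exp (-((1 - t) * (Real.log (1 - t) / t))))⁻¹ with hfd
      have hlog : HasDerivAt (fun s : ℝ => Real.log (1 - s)) (-1) 0 := by
        have hs : HasDerivAt (fun s : ℝ => 1 - s) (-1) 0 := (hasDerivAt_id 0).const_sub 1
        have := (Real.hasDerivAt_log (x := (1:ℝ) - 0) (by norm_num)).comp 0 hs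
        simpa [Function.comp_def] using this
      have hr : Tendsto (fun t : ℝ => Real.log (1 - t) / t)
          (nhdsWithin 0 {(0:ℝ)}ᶜ) (nhds (-1)) := by
        have := hasDerivAt_iff_tendsto_slope.mp hlog
        refine this.congr (fun t => ?_)
        rw [slope_def_field]
        simp
      have h1t : Tendsto (fun t : ℝ => 1 - t) (nhdsWithin 0 {(0:ℝ)}ᶜ) (nhds 1) := by
        have : ContinuousAt (fun t : ℝ => 1 - t) 0 := continuousAt_const.sub continuousAt_id
        simpa using this.tendsto.mono_left nhdsWithin_le_nhds
      have hinner : Tendsto (fun t : ℝ => -((1 - t) * (Real.log (1 - t) / t)))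
          (nhdsWithin 0 {(0:ℝ)}ᶜ) (nhds 1) := by
        have := (h1t.mul hr).neg
        simpa using this
      have hexp := (Real.continuous_exp.continuousAt (x := (1:ℝ))).tendsto.comp hinner
      have hid : Tendsto (fun t : ℝ => t) (nhdsWithin 0 {(0:ℝ)}ᶜ) (nhds 0) :=
        tendsto_id.mono_left nhdsWithin_le_nhds
      have hsum := hid.add hexp
      have hflim : Tendsto f (nhdsWithin 0 {(0:ℝ)}ᶜ) (nhds (1 / Real.exp 1)) := by
        have := hsum.inv₀ (by positivity : (0:ℝ) + Real.exp 1 ≠ 0)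
        simpa [hfd, one_div] using this
      have hqne0 : Tendsto (fun A : ℝ => pdet τ (A + 0)) (nhdsWithin 0 (Set.Ioi 0))
          (nhdsWithin 0 {(0:ℝ)}ᶜ) := by
        have := hqne
        rwa [hp00] at this
      have hcomp := hflim.comp hqne0
      refine hcomp.congr' ?_
      filter_upwards [self_mem_nhdsWithin] with A hA
      have ht : 0 < pdet τ (A + 0) := by
        have := hqgt A hA; rwa [hp00] at this
      set t := pdet τ (A + 0) with htd
      have ht0 : t ≠ 0 := ht.ne'
      rw [Function.comp_apply, muStar_eq A, hΦdef]
      simp only [hp00, hb_zero, sub_zero]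
      -- goal: f t = ((1 + exp (hb t / t))⁻¹ - 0) / (t - 0)  (or reversed)
      have h1 : Real.exp (Real.log t + hb t / t) = t * Real.exp (hb t / t) := by
        rw [Real.exp_add, Real.exp_log ht]
      have h2 : Real.log t + hb t / t = -((1 - t) * (Real.log (1 - t) / t)) := by
        simp only [hb]
        field_simp
        ring
      have he : (0:ℝ) < Real.exp (hb t / t) := Real.exp_pos _
      have hne1 : (1:ℝ) + Real.exp (hb t / t) ≠ 0 := by positivity
      have hne2 : t + t * Real.exp (hb t / t) ≠ 0 := by positivity
      rw [hfd]
      simp only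
      rw [← h2, h1,
        show t + t * Real.exp (hb t / t) = t * (1 + Real.exp (hb t / t)) from by ring,
        mul_inv, inv_mul_eq_div]
  · -- Λ0 > 0
    intro hpos
    have hp0pos : 0 < p0 := by
      have : Real.exp (-(Λ0 * τ)) < 1 :=
        Real.exp_lt_one_iff.mpr (by nlinarith)
      simp only [hp0def, pdet]; linarith
    constructor
    · -- A → ∞
      set β := Real.exp (Real.exp (Λ0 * τ) * hb p0) with hβdef
      have hβ : 0 < β := Real.exp_pos _
      have hE : Real.exp (Λ0 * τ) = (1 - p0)⁻¹ := by
        rw [h1mp0, ← Real.exp_neg, neg_neg]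
      have harg : (hb 1 - hb p0) / (1 - p0) = -(Real.exp (Λ0 * τ) * hb p0) := by
        rw [hb_one, hE]
        ring
      have hΦ1 : Φ 1 = 1 - 1 / ((1 + β) * (1 - p0)) := by
        rw [hΦdef]
        simp only
        rw [harg, Real.exp_neg, ← hβdef]
        have h1β : (1:ℝ) + β ≠ 0 := by positivity
        have h1β' : (1:ℝ) + β⁻¹ ≠ 0 := by positivity
        field_simp
        ring
      rwa [hΦ1] at hΦtop
    · -- A → 0+
      set L := Real.log (1 - p0) - Real.log p0 with hLdef
      set c2 := -(1 - p0)⁻¹ - p0⁻¹ with hc2def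
      set G : ℝ → ℝ := fun t => if t = p0 then L else (hb t - hb p0) / (t - p0) with hGdef
      set H : ℝ → ℝ := fun t => (1 + Real.exp (G t))⁻¹ with hHdef
      have hGp0 : G p0 = L := by rw [hGdef]; simp
      have hexpL : Real.exp L = (1 - p0) / p0 := by
        rw [hLdef, Real.exp_sub, Real.exp_log hp0pos, Real.exp_log (by linarith)]
      have hG : HasDerivAt G (c2 / 2) p0 := by
        rw [hasDerivAt_iff_tendsto_slope]
        have hf : ∀ᶠ t in nhds p0, HasDerivAt hb (Real.log (1 - t) - Real.log t) t := by
          filter_upwards [Ioo_mem_nhds hp0pos hp0lt1] with t ht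
          exact hb_deriv ht.1 ht.2
        have base := tendsto_slope_slope hb
          (fun t => Real.log (1 - t) - Real.log t) p0 c2 hf (phi_deriv hp0pos hp0lt1)
        refine base.congr' ?_
        filter_upwards [eventually_mem_nhdsWithin] with t ht
        have htne : t ≠ p0 := ht
        rw [slope_def_field, hGp0, hGdef]
        simp only [if_neg htne, hLdef]
      have hσ : HasDerivAt (fun s : ℝ => (1 + Real.exp s)⁻¹)
          (-(Real.exp L) / (1 + Real.exp L) ^ 2) (G p0) := by
        rw [hGp0]
        have := ((Real.hasDerivAt_exp L).const_add 1).inv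
          (by positivity : (1:ℝ) + Real.exp L ≠ 0)
        exact this
      have hH : HasDerivAt H (1 / 2) p0 := by
        have hcomp := hσ.comp p0 hG
        have hval : -(Real.exp L) / (1 + Real.exp L) ^ 2 * (c2 / 2) = 1 / 2 := by
          rw [hexpL, hc2def]
          have hp0ne : p0 ≠ 0 := hp0pos.ne'
          field_simp
          ring
        rw [hval] at hcomp
        exact hcomp
      have hHp0 : H p0 = p0 := by
        rw [hHdef]
        simp only [hGp0, hexpL]
        rw [show (1:ℝ) + (1 - p0) / p0 = p0⁻¹ from by field_simp; ring]
        exact inv_inv p0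
      have hslopeH := hasDerivAt_iff_tendsto_slope.mp hH
      have hcomp := hslopeH.comp hqne
      refine hcomp.congr' ?_
      filter_upwards [self_mem_nhdsWithin] with A hA
      have hgt := hqgt A hA
      have hne : pdet τ (A + Λ0) ≠ p0 := (ne_of_gt hgt)
      rw [Function.comp_apply, muStar_eq A, slope_def_field, hHp0, hHdef]
      simp only [hGdef, if_neg hne, hΦdef]
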